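/- For every word w over {L,R}: P_w(ℓ_R(w)+1) = (1/2)^{ℓ_R(w)+1}, P_w(−(ℓ_L(w)+1)) = (1/2)^{ℓ_L(w)+1}, and P_w(d) = 0 whenever d > ℓ_R(w)+1 or d < −(ℓ_L(w)+1); that is, max(supp P_w) = ℓ_R(w)+1 and min(supp P_w) = −(ℓ_L(w)+1). -/
import Mathlib


/-- The probability mass functions `P t` on ℤ, defined by
`P 1 = δ₀`, `P (2t) = P t`, `P (2t+1) d = ½ P (t+1) (d+1) + ½ P t (d-1)`. -/
noncomputable def P : ℕ → ℤ → ℝ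
  | 0, _ => 0
  | 1, d => if d = 0 then 1 else 0
  | (n+2), d =>
      if h : (n + 2) % 2 = 0 then P ((n+2)/2) d
      else (1/2) * P ((n+2)/2 + 1) (d+1) + (1/2) * P ((n+2)/2) (d-1)
  decreasing_by all_goals omega

/-- Letters of the alphabet. -/
inductive LR | L | R
deriving DecidableEq

/-- One step of the identification of words with odd integers: `L : t ↦ 2t-1`, `R : t ↦ 2t+1`. -/
def LRstep (t : ℕ) : LR → ℕ
  | LR.L => 2 * t - 1
  | LR.R => 2 * t + 1

/-- The odd integer associated to a word over `{L,R}`, starting from 3. -/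
def hword (w : List LR) : ℕ := w.foldl LRstep 3

lemma P_one (d : ℤ) : P 1 d = if d = 0 then 1 else 0 := by simp [P]

lemma P_even (t : ℕ) (h : t % 2 = 0) (h2 : 2 ≤ t) (d : ℤ) : P t d = P (t/2) d := by
  obtain ⟨n, rfl⟩ : ∃ n, t = n + 2 := ⟨t - 2, by omega⟩
  rw [P]; simp [h]

lemma P_odd (t : ℕ) (h : t % 2 = 1) (h3 : 3 ≤ t) (d : ℤ) :
    P t d = 1/2 * P (t/2 + 1) (d+1) + 1/2 * P (t/2) (d-1) := by
  obtain ⟨n, rfl⟩ : ∃ n, t = n + 2 := ⟨t - 2, by omega⟩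
  rw [P]; simp [h]

def PInv (t R L : ℕ) : Prop :=
  t % 2 = 1 ∧ 3 ≤ t ∧
  P t ((R:ℤ)+1) = (1/2:ℝ)^(R+1) ∧
  P t (-((L:ℤ)+1)) = (1/2:ℝ)^(L+1) ∧
  (∀ d : ℤ, ((R:ℤ)+1 < d ∨ d < -((L:ℤ)+1)) → P t d = 0) ∧
  P (t-1) (R:ℤ) = (1/2:ℝ)^R ∧
  (∀ d : ℤ, ((R:ℤ) < d ∨ d < -((L:ℤ)+1)) → P (t-1) d = 0) ∧
  P (t+1) (-(L:ℤ)) = (1/2:ℝ)^L ∧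
  (∀ d : ℤ, ((R:ℤ)+1 < d ∨ d < -(L:ℤ)) → P (t+1) d = 0)

lemma inv_base : PInv 3 0 0 := by
  have h2 : ∀ d : ℤ, P 2 d = P 1 d := fun d => by rw [P_even 2 rfl le_rfl]
  have h4 : ∀ d : ℤ, P 4 d = P 1 d := fun d => by
    rw [P_even 4 rfl (by norm_num)]; exact h2 d
  have h3 : ∀ d : ℤ, P 3 d = 1/2 * P 1 (d+1) + 1/2 * P 1 (d-1) := fun d => by
    rw [P_odd 3 rfl le_rfl]; rw [show (3:ℕ)/2 = 1 from rfl]; rw [h2]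
  refine ⟨rfl, le_rfl, ?_, ?_, ?_, ?_, ?_, ?_, ?_⟩
  · norm_num [h3, P_one]
  · norm_num [h3, P_one]
  · intro d hd
    rw [h3, P_one, P_one, if_neg (by omega), if_neg (by omega)]; ring
  · norm_num [h2, P_one]
  · intro d hd
    rw [h2, P_one, if_neg (by omega)]
  · norm_num [h4, P_one]
  · intro d hd
    rw [h4, P_one, if_neg (by omega)]

lemma inv_R (t R L : ℕ) (h : PInv t R L) : PInv (2*t+1) (R+1) L := by
  obtain ⟨hmod, ht3, hmax, hmin, hz, hQ, hQz, hS, hSz⟩ := h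
  have hodd : ∀ d : ℤ, P (2*t+1) d = 1/2 * P (t+1) (d+1) + 1/2 * P t (d-1) := fun d => by
    rw [P_odd (2*t+1) (by omega) (by omega), show (2*t+1)/2 = t from by omega]
  have hm1 : ∀ d : ℤ, P (2*t+1-1) d = P t d := fun d => by
    rw [show 2*t+1-1 = 2*t from by omega, P_even (2*t) (by omega) (by omega),
      show 2*t/2 = t from by omega]
  have hp1 : ∀ d : ℤ, P (2*t+1+1) d = P (t+1) d := fun d => by
    rw [show 2*t+1+1 = 2*(t+1) from by omega, P_even (2*(t+1)) (by omega) (by omega),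
      show 2*(t+1)/2 = t+1 from by omega]
  refine ⟨by omega, by omega, ?_, ?_, ?_, ?_, ?_, ?_, ?_⟩
  · push_cast
    rw [hodd, hSz ((R:ℤ)+1+1+1) (Or.inl (by omega)),
      show ((R:ℤ)+1+1-1) = (R:ℤ)+1 from by ring, hmax, pow_succ, pow_succ]
    ring
  · rw [hodd, show (-((L:ℤ)+1)+1) = -(L:ℤ) from by ring, hS,
      hz (-((L:ℤ)+1)-1) (Or.inr (by omega)), pow_succ]
    ring
  · intro d hd
    push_cast at hd
    rw [hodd, hSz (d+1) (by omega), hz (d-1) (by omega)]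
    ring
  · rw [hm1]
    push_cast
    exact hmax
  · intro d hd
    push_cast at hd
    rw [hm1]
    exact hz d (by omega)
  · rw [hp1]
    exact hS
  · intro d hd
    push_cast at hd
    rw [hp1]
    exact hSz d (by omega)

lemma inv_L (t R L : ℕ) (h : PInv t R L) : PInv (2*t-1) R (L+1) := by
  obtain ⟨hmod, ht3, hmax, hmin, hz, hQ, hQz, hS, hSz⟩ := h
  have hodd : ∀ d : ℤ, P (2*t-1) d = 1/2 * P t (d+1) + 1/2 * P (t-1) (d-1) := fun d => by
    rw [P_odd (2*t-1) (by omega) (by omega), show (2*t-1)/2 = t-1 from by omega,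
      show t-1+1 = t from by omega]
  have hm1 : ∀ d : ℤ, P (2*t-1-1) d = P (t-1) d := fun d => by
    rw [show 2*t-1-1 = 2*(t-1) from by omega, P_even (2*(t-1)) (by omega) (by omega),
      show 2*(t-1)/2 = t-1 from by omega]
  have hp1 : ∀ d : ℤ, P (2*t-1+1) d = P t d := fun d => by
    rw [show 2*t-1+1 = 2*t from by omega, P_even (2*t) (by omega) (by omega),
      show 2*t/2 = t from by omega]
  refine ⟨by omega, by omega, ?_, ?_, ?_, ?_, ?_, ?_, ?_⟩
  · rw [hodd, hz ((R:ℤ)+1+1) (Or.inl (by omega)),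
      show ((R:ℤ)+1-1) = (R:ℤ) from by ring, hQ, pow_succ]
    ring
  · push_cast
    rw [hodd, show (-((L:ℤ)+1+1)+1) = -((L:ℤ)+1) from by ring, hmin,
      hQz (-((L:ℤ)+1+1)-1) (Or.inr (by omega)), pow_succ, pow_succ]
    ring
  · intro d hd
    push_cast at hd
    rw [hodd, hz (d+1) (by omega), hQz (d-1) (by omega)]
    ring
  · rw [hm1]
    exact hQ
  · intro d hd
    push_cast at hd
    rw [hm1]
    exact hQz d (by omega)
  · rw [hp1]
    exact hmin
  · intro d hd
    push_cast at hd
    rw [hp1]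
    exact hz d (by omega)

lemma inv_word (w : List LR) : PInv (hword w) (w.count LR.R) (w.count LR.L) := by
  induction w using List.reverseRecOn with
  | nil => exact inv_base
  | append_singleton w x ih =>
    have hh : hword (w ++ [x]) = LRstep (hword w) x := by
      simp [hword, List.foldl_append]
    cases x with
    | R =>
      have hR : (w ++ [LR.R]).count LR.R = w.count LR.R + 1 := by
        simp [List.count_append]
      have hL : (w ++ [LR.R]).count LR.L = w.count LR.L := by
        simp [List.count_append]
      rw [hh, hR, hL]
      exact inv_R _ _ _ ih
    | L =>
      have hR : (w ++ [LR.L]).count LR.R = w.count LR.R := by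
        simp [List.count_append]
      have hL : (w ++ [LR.L]).count LR.L = w.count LR.L + 1 := by
        simp [List.count_append]
      rw [hh, hR, hL]
      exact inv_L _ _ _ ih

/-- The support of `P_w`: the maximum of the support is `ℓ_R(w) + 1`, where the mass is
`(1/2)^(ℓ_R(w)+1)`, the minimum is `-(ℓ_L(w) + 1)`, where the mass is `(1/2)^(ℓ_L(w)+1)`,
and `P_w` vanishes outside `[-(ℓ_L(w)+1), ℓ_R(w)+1]`. -/
theorem support_P_word (w : List LR) :
    P (hword w) ((w.count LR.R : ℤ) + 1) = (1/2 : ℝ) ^ (w.count LR.R + 1) ∧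
    P (hword w) (-((w.count LR.L : ℤ) + 1)) = (1/2 : ℝ) ^ (w.count LR.L + 1) ∧
    (∀ d : ℤ, ((w.count LR.R : ℤ) + 1 < d ∨ d < -((w.count LR.L : ℤ) + 1)) →
      P (hword w) d = 0) := by
  obtain ⟨-, -, h1, h2, h3, -⟩ := inv_word w
  exact ⟨h1, h2, h3⟩
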